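/- For the group-normalized Laplacian shrinkage estimator β̃, let β̄_g = v_g⁻¹Σ_{j∈V_g} β̃_j denote the average of the estimates within group V_g. Then for any j ∈ V_g and k ∈ V_h (g and h not necessarily distinct), λ₂·|(β̃_j − β̄_g) − (β̃_k − β̄_h)| ≤ n⁻¹‖x_j − x_k‖·‖y‖. -/

import Mathlib

/-!
Moving the minimizer along the `j`-th coordinate changes the objective by a quadratic in the step
whose linear coefficient is `λ₂ (β̃_j − β̄_g) − n⁻¹ ⟨x_j, y − Xβ̃⟩`, so minimality makes it vanish.
Subtracting the conditions for `j` and `k` and applying Cauchy–Schwarz bounds the left side by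
`n⁻¹ ‖x_j − x_k‖ ‖y − Xβ̃‖`, and `‖y − Xβ̃‖ ≤ ‖y‖` because `G β̃ ≤ G 0` and the penalty is
nonnegative.
-/

open Matrix Finset

lemma linear_coeff_eq_zero_of_forall_nonneg {a b : ℝ} (h : ∀ t : ℝ, 0 ≤ a * t ^ 2 + b * t) :
    b = 0 := by
  have hmin : IsLocalMin (fun t : ℝ => a * t ^ 2 + b * t) 0 :=
    Filter.Eventually.of_forall fun t => by simpa using h t
  have hderiv : HasDerivAt (fun t : ℝ => a * t ^ 2 + b * t) b 0 := by
    simpa using (((hasDerivAt_id' (0 : ℝ)).fun_pow 2).const_mul a).fun_add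
      ((hasDerivAt_id' (0 : ℝ)).const_mul b)
  exact hmin.hasDerivAt_eq_zero hderiv

lemma abs_sum_mul_le_sqrt_mul_sqrt {ι : Type*} (s : Finset ι) (f g : ι → ℝ) :
    |∑ i ∈ s, f i * g i| ≤ √(∑ i ∈ s, f i ^ 2) * √(∑ i ∈ s, g i ^ 2) :=
  (Real.abs_le_sqrt (sum_mul_sq_le_sq_mul_sq s f g)).trans_eq
    (Real.sqrt_mul (sum_nonneg fun _ _ => sq_nonneg _) _)

section SumSqDev

variable {ι : Type*}

/-- The paper's `b_g'(I − v_g⁻¹ 1_g 1_g') b_g` for `s = V_g`, i.e. `∑ j ∈ s, (f j − mean)²`. -/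
noncomputable def sumSqDev (s : Finset ι) (f : ι → ℝ) : ℝ :=
  ∑ j ∈ s, f j ^ 2 - (#s : ℝ)⁻¹ * (∑ j ∈ s, f j) ^ 2

lemma sumSqDev_nonneg (s : Finset ι) (f : ι → ℝ) : 0 ≤ sumSqDev s f := by
  rcases s.eq_empty_or_nonempty with rfl | hs
  · simp [sumSqDev]
  · have hcard : (0 : ℝ) < #s := by exact_mod_cast hs.card_pos
    rw [sumSqDev, sub_nonneg, inv_mul_le_iff₀ hcard]
    exact sq_sum_le_card_mul_sum_sq

lemma sumSqDev_add_single_of_mem [DecidableEq ι] {s : Finset ι} {j : ι} (hj : j ∈ s)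
    (f : ι → ℝ) (t : ℝ) :
    sumSqDev s (f + Pi.single j t) = sumSqDev s f
      + 2 * t * (f j - (#s : ℝ)⁻¹ * ∑ l ∈ s, f l) + (1 - (#s : ℝ)⁻¹) * t ^ 2 := by
  have hsum (g : ℝ → ℝ) :
      ∑ l ∈ s, g ((f + Pi.single j t : ι → ℝ) l) = g (f j + t) + ∑ l ∈ s.erase j, g (f l) := by
    rw [← add_sum_erase s _ hj]
    congr 1
    · simp
    · exact sum_congr rfl fun l hl => by simp [ne_of_mem_erase hl]
  have hlin := hsum id
  dsimp only [id] at hlin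
  rw [sumSqDev, sumSqDev, hsum (· ^ 2), hlin, ← add_sum_erase s f hj,
    ← add_sum_erase s (fun l => f l ^ 2) hj]
  ring

lemma sumSqDev_add_single_of_notMem [DecidableEq ι] {s : Finset ι} {j : ι} (hj : j ∉ s)
    (f : ι → ℝ) (t : ℝ) :
    sumSqDev s (f + Pi.single j t) = sumSqDev s f := by
  have hf : ∀ l ∈ s, (f + Pi.single j t : ι → ℝ) l = f l := fun l hl => by
    simp [ne_of_mem_of_not_mem hl hj]
  rw [sumSqDev, sumSqDev, sum_congr rfl hf, sum_congr rfl fun l hl => by rw [hf l hl]]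

end SumSqDev

section Objective

variable {m ι κ : Type*} [Fintype m] [Fintype ι] [Fintype κ] [DecidableEq κ]

def groupOf (grp : ι → κ) (g : κ) : Finset ι := univ.filter (fun j => grp j = g)

noncomputable def groupPenalty (grp : ι → κ) (b : ι → ℝ) : ℝ :=
  ∑ g, sumSqDev (groupOf grp g) b

noncomputable def groupMean (grp : ι → κ) (b : ι → ℝ) (g : κ) : ℝ :=
  (#(groupOf grp g) : ℝ)⁻¹ * ∑ j ∈ groupOf grp g, b j

lemma groupPenalty_nonneg (grp : ι → κ) (b : ι → ℝ) : 0 ≤ groupPenalty grp b :=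
  sum_nonneg fun _ _ => sumSqDev_nonneg _ b

lemma groupPenalty_add_single [DecidableEq ι] (grp : ι → κ) (b : ι → ℝ) (j : ι) (t : ℝ) :
    groupPenalty grp (b + Pi.single j t) = groupPenalty grp b
      + 2 * t * (b j - groupMean grp b (grp j)) + (1 - (#(groupOf grp (grp j)) : ℝ)⁻¹) * t ^ 2 := by
  have hj : j ∈ groupOf grp (grp j) := by simp [groupOf]
  rw [add_assoc, ← sub_eq_iff_eq_add', groupPenalty, groupPenalty, ← sum_sub_distrib,
    sum_eq_single (grp j), sumSqDev_add_single_of_mem hj, groupMean]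
  · ring
  · intro g _ hg
    rw [sumSqDev_add_single_of_notMem (by simpa [groupOf] using Ne.symm hg), sub_self]
  · simp

noncomputable def laplacianObjective (c lam : ℝ) (y : m → ℝ) (X : Matrix m ι ℝ) (grp : ι → κ)
    (b : ι → ℝ) : ℝ :=
  c * ∑ i, (y i - (X *ᵥ b) i) ^ 2 + lam / 2 * groupPenalty grp b

lemma sum_sq_sub_mulVec_add_single [DecidableEq ι] (y : m → ℝ) (X : Matrix m ι ℝ) (b : ι → ℝ)
    (j : ι) (t : ℝ) :
    ∑ i, (y i - (X *ᵥ (b + Pi.single j t)) i) ^ 2 = ∑ i, (y i - (X *ᵥ b) i) ^ 2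
      - 2 * t * ∑ i, X i j * (y i - (X *ᵥ b) i) + t ^ 2 * ∑ i, X i j ^ 2 := by
  simp only [mulVec_add, mulVec_single, Pi.add_apply, Pi.smul_apply, col_apply, op_smul_eq_mul,
    mul_sum, ← sum_sub_distrib, ← sum_add_distrib]
  exact sum_congr rfl fun i _ => by ring

lemma laplacianObjective_add_single [DecidableEq ι] (c lam : ℝ) (y : m → ℝ) (X : Matrix m ι ℝ)
    (grp : ι → κ) (b : ι → ℝ) (j : ι) (t : ℝ) :
    laplacianObjective c lam y X grp (b + Pi.single j t) = laplacianObjective c lam y X grp b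
      + (c * ∑ i, X i j ^ 2 + lam / 2 * (1 - (#(groupOf grp (grp j)) : ℝ)⁻¹)) * t ^ 2
      + (lam * (b j - groupMean grp b (grp j)) - 2 * c * ∑ i, X i j * (y i - (X *ᵥ b) i)) * t := by
  rw [laplacianObjective, laplacianObjective, sum_sq_sub_mulVec_add_single,
    groupPenalty_add_single]
  ring

lemma lam_mul_sub_groupMean_eq_of_isMin [DecidableEq ι] {c lam : ℝ} {y : m → ℝ}
    {X : Matrix m ι ℝ} {grp : ι → κ} {β : ι → ℝ}
    (hmin : ∀ b, laplacianObjective c lam y X grp β ≤ laplacianObjective c lam y X grp b) (j : ι) :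
    lam * (β j - groupMean grp β (grp j)) = 2 * c * ∑ i, X i j * (y i - (X *ᵥ β) i) := by
  refine sub_eq_zero.mp (linear_coeff_eq_zero_of_forall_nonneg (a := c * ∑ i, X i j ^ 2
    + lam / 2 * (1 - (#(groupOf grp (grp j)) : ℝ)⁻¹)) fun t => ?_)
  have := hmin (β + Pi.single j t)
  rw [laplacianObjective_add_single] at this
  linarith

lemma sum_sq_sub_mulVec_le_of_isMin {c lam : ℝ} (hc : 0 < c) (hlam : 0 ≤ lam) {y : m → ℝ}
    {X : Matrix m ι ℝ} {grp : ι → κ} {β : ι → ℝ}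
    (hmin : ∀ b, laplacianObjective c lam y X grp β ≤ laplacianObjective c lam y X grp b) :
    ∑ i, (y i - (X *ᵥ β) i) ^ 2 ≤ ∑ i, y i ^ 2 := by
  have h0 := hmin 0
  have hpen := mul_nonneg (div_nonneg hlam zero_le_two) (groupPenalty_nonneg grp β)
  have hpen0 : groupPenalty grp (0 : ι → ℝ) = 0 := by simp [groupPenalty, sumSqDev]
  rw [laplacianObjective, laplacianObjective, hpen0, mulVec_zero] at h0
  simp only [Pi.zero_apply, sub_zero, mul_zero, add_zero] at h0
  exact le_of_mul_le_mul_left (by linarith) hc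

end Objective

theorem grouped_laplacian_between_group_bound_general
    (n q J : ℕ) (hn : 0 < n)
    (y : Fin n → ℝ) (X : Matrix (Fin n) (Fin q) ℝ)
    -- partition of {1,…,q} into groups: `grp j` is the group of index j
    (grp : Fin q → Fin J)
    (lam2 : ℝ) (hlam2 : 0 < lam2)
    (G : (Fin q → ℝ) → ℝ)
    (hG : ∀ b, G b = (2 * n : ℝ)⁻¹ * ∑ i, (y i - X.mulVec b i)^2
      + lam2 / 2 * ∑ g : Fin J,
          ((∑ j ∈ Finset.univ.filter (fun j => grp j = g), (b j)^2)
            - ((Finset.univ.filter (fun j => grp j = g)).card : ℝ)⁻¹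
              * (∑ j ∈ Finset.univ.filter (fun j => grp j = g), b j)^2))
    (βt : Fin q → ℝ) (hmin : ∀ b, G βt ≤ G b)
    -- the within-group averages of the estimates
    (βbar : Fin J → ℝ)
    (hβbar : ∀ g, βbar g = ((Finset.univ.filter (fun j => grp j = g)).card : ℝ)⁻¹
      * ∑ j ∈ Finset.univ.filter (fun j => grp j = g), βt j) :
    ∀ j k : Fin q,
      lam2 * |(βt j - βbar (grp j)) - (βt k - βbar (grp k))|
        ≤ Real.sqrt (∑ i, (X i j - X i k)^2) * Real.sqrt (∑ i, (y i)^2) / n := by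
  obtain rfl : G = laplacianObjective (2 * n : ℝ)⁻¹ lam2 y X grp := funext hG
  obtain rfl : βbar = groupMean grp βt := funext hβbar
  intro j k
  have hfoc (l : Fin q) : lam2 * (βt l - groupMean grp βt (grp l))
      = (n : ℝ)⁻¹ * ∑ i, X i l * (y i - (X *ᵥ βt) i) := by
    rw [lam_mul_sub_groupMean_eq_of_isMin hmin l]
    ring
  have hdiff : lam2 * ((βt j - groupMean grp βt (grp j)) - (βt k - groupMean grp βt (grp k)))
      = (n : ℝ)⁻¹ * ∑ i, (X i j - X i k) * (y i - (X *ᵥ βt) i) := by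
    rw [mul_sub, hfoc, hfoc, ← mul_sub, ← sum_sub_distrib]
    simp only [sub_mul]
  calc lam2 * |(βt j - groupMean grp βt (grp j)) - (βt k - groupMean grp βt (grp k))|
      = |(n : ℝ)⁻¹ * ∑ i, (X i j - X i k) * (y i - (X *ᵥ βt) i)| := by
        rw [← hdiff, abs_mul, abs_of_pos hlam2]
    _ = (n : ℝ)⁻¹ * |∑ i, (X i j - X i k) * (y i - (X *ᵥ βt) i)| := by
        rw [abs_mul, abs_of_nonneg (by positivity)]
    _ ≤ (n : ℝ)⁻¹ * (√(∑ i, (X i j - X i k) ^ 2) * √(∑ i, (y i - (X *ᵥ βt) i) ^ 2)) := by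
        gcongr
        exact abs_sum_mul_le_sqrt_mul_sqrt _ _ _
    _ ≤ (n : ℝ)⁻¹ * (√(∑ i, (X i j - X i k) ^ 2) * √(∑ i, y i ^ 2)) := by
        gcongr _ * (_ * √?_)
        exact sum_sq_sub_mulVec_le_of_isMin (by positivity) hlam2.le hmin
    _ = √(∑ i, (X i j - X i k) ^ 2) * √(∑ i, y i ^ 2) / n := inv_mul_eq_div _ _

/-- **Proposition 2(ii) of Huang, Ma, Li, Zhang (2011).**
For the group-normalized Laplacian shrinkage estimator `β̃`, with `β̄_g` the
within-group average of the estimates, for any `j ∈ V_g` and `k ∈ V_h`,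
`λ₂·|(β̃_j − β̄_g) − (β̃_k − β̄_h)| ≤ n⁻¹‖x_j − x_k‖·‖y‖`. -/
theorem grouped_laplacian_between_group_bound
    (n q J : ℕ) (hn : 0 < n)
    (y : Fin n → ℝ) (X : Matrix (Fin n) (Fin q) ℝ)
    (hstd : ∀ j, ∑ i, (X i j)^2 = (n : ℝ))
    -- partition of {1,…,q} into groups: `grp j` is the group of index j
    (grp : Fin q → Fin J) (hsurj : Function.Surjective grp)
    (lam2 : ℝ) (hlam2 : 0 < lam2)
    (G : (Fin q → ℝ) → ℝ)
    (hG : ∀ b, G b = (2 * n : ℝ)⁻¹ * ∑ i, (y i - X.mulVec b i)^2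
      + lam2 / 2 * ∑ g : Fin J,
          ((∑ j ∈ Finset.univ.filter (fun j => grp j = g), (b j)^2)
            - ((Finset.univ.filter (fun j => grp j = g)).card : ℝ)⁻¹
              * (∑ j ∈ Finset.univ.filter (fun j => grp j = g), b j)^2))
    (βt : Fin q → ℝ) (hmin : ∀ b, G βt ≤ G b)
    -- the within-group averages of the estimates
    (βbar : Fin J → ℝ)
    (hβbar : ∀ g, βbar g = ((Finset.univ.filter (fun j => grp j = g)).card : ℝ)⁻¹
      * ∑ j ∈ Finset.univ.filter (fun j => grp j = g), βt j) :
    ∀ j k : Fin q,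
      lam2 * |(βt j - βbar (grp j)) - (βt k - βbar (grp k))|
        ≤ Real.sqrt (∑ i, (X i j - X i k)^2) * Real.sqrt (∑ i, (y i)^2) / n :=
  grouped_laplacian_between_group_bound_general n q J hn y X grp lam2 hlam2 G hG βt hmin βbar hβbar
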